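/- arXiv:2007.00582 — 3 statements merged into one kernel-verified Lean document; each statement's English description precedes it below -/
import Mathlib

section
/- Let Z be a Banach space, V ↪ Z a continuously embedded Banach space, W = Z*, and L : V → W a bounded, symmetric (as above) linear operator which is Fredholm of index zero. Let V₀ = ker L, let P : V → V be a continuous projection with image V₀, and let J : V → Z** be the canonical injection restricted to V. Then J(Im P) = ker L*, and consequently Im L = ker P* ∩ W, where P* is the adjoint projection and ker P* ∩ W is computed inside V* via the embedding W ↪ V*. -/
/-!
Symmetry of `L` gives `J (ker L) ⊆ ker L*`. A functional in `ker L*` vanishes on `Im L`, so it is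
determined by its restriction to the complement `C`; hence `dim ker L* ≤ dim C* = dim ker L`, which
forces `J (ker L) = ker L*`, and then restriction `ker L* → C*` is an isomorphism. If
`w = L φ + c` with `c ∈ C` annihilates `i (ker L)`, so does `c`, i.e. every element of `ker L*`
vanishes at `c`; since these restrict to all of `C*`, `c = 0` and `w ∈ Im L`.
-/

open Module LinearMap NormedSpace

namespace StrongDual

variable {𝕜 W : Type*} [NontriviallyNormedField 𝕜] [NormedAddCommGroup W] [NormedSpace 𝕜 W]

variable (𝕜) in
def restrict (C : Submodule 𝕜 W) : StrongDual 𝕜 W →ₗ[𝕜] Module.Dual 𝕜 C :=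
  C.subtype.dualMap ∘ₗ ContinuousLinearMap.coeLM 𝕜

theorem injective_restrict_domRestrict {p C : Submodule 𝕜 W} {A : Submodule 𝕜 (StrongDual 𝕜 W)}
    (hpC : Codisjoint p C) (hA : ∀ F ∈ A, ∀ x ∈ p, F x = 0) :
    Function.Injective ((restrict 𝕜 C).domRestrict A) := by
  rw [injective_iff_map_eq_zero]
  rintro ⟨F, hFA⟩ hF
  have hFC : ∀ c ∈ C, F c = 0 := fun c hc => LinearMap.congr_fun hF ⟨c, hc⟩
  rw [Subtype.ext_iff, Submodule.coe_zero]
  exact ext_on_codisjoint hpC (fun x hx => hA F hFA x hx) hFC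

end StrongDual

section SymmetricOperator

-- In the application `W = Z*` and `T = J`; the symmetry of `L` then reads `T ψ (L φ) = T φ (L ψ)`.
variable {𝕜 V W : Type*} [NontriviallyNormedField 𝕜] [NormedAddCommGroup V] [NormedSpace 𝕜 V]
  [NormedAddCommGroup W] [NormedSpace 𝕜 W]
  {L : V →L[𝕜] W} {T : V →L[𝕜] StrongDual 𝕜 W} {Lstar : StrongDual 𝕜 W →L[𝕜] StrongDual 𝕜 V}

theorem mem_ker_adjoint_iff (hLstar : ∀ F φ, Lstar F φ = F (L φ))
    {F : StrongDual 𝕜 W} :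
    F ∈ ker (Lstar : StrongDual 𝕜 W →ₗ[𝕜] StrongDual 𝕜 V) ↔ ∀ φ, F (L φ) = 0 := by
  rw [mem_ker, ContinuousLinearMap.coe_coe, ContinuousLinearMap.ext_iff]
  simp [hLstar]

theorem apply_eq_zero_of_mem_ker (hsymm : ∀ φ ψ, T ψ (L φ) = T φ (L ψ)) {v : V}
    (hv : v ∈ ker (L : V →ₗ[𝕜] W)) (φ : V) : T v (L φ) = 0 := by
  rw [hsymm, show L v = 0 from hv, map_zero]

theorem map_ker_le_ker_adjoint (hsymm : ∀ φ ψ, T ψ (L φ) = T φ (L ψ))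
    (hLstar : ∀ F φ, Lstar F φ = F (L φ)) :
    (ker (L : V →ₗ[𝕜] W)).map (T : V →ₗ[𝕜] StrongDual 𝕜 W) ≤
      ker (Lstar : StrongDual 𝕜 W →ₗ[𝕜] StrongDual 𝕜 V) := by
  rintro _ ⟨v, hv, rfl⟩
  rw [mem_ker_adjoint_iff hLstar]
  exact apply_eq_zero_of_mem_ker hsymm hv

variable {C : Submodule 𝕜 W}

theorem injective_restrict_ker_adjoint (hLstar : ∀ F φ, Lstar F φ = F (L φ))
    (hcompl : IsCompl (range (L : V →ₗ[𝕜] W)) C) :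
    Function.Injective ((StrongDual.restrict 𝕜 C).domRestrict
      (ker (Lstar : StrongDual 𝕜 W →ₗ[𝕜] StrongDual 𝕜 V))) := by
  refine StrongDual.injective_restrict_domRestrict hcompl.codisjoint ?_
  rintro F hF _ ⟨φ, rfl⟩
  exact (mem_ker_adjoint_iff hLstar).1 hF φ

variable [FiniteDimensional 𝕜 C]

theorem finiteDimensional_ker_adjoint (hLstar : ∀ F φ, Lstar F φ = F (L φ))
    (hcompl : IsCompl (range (L : V →ₗ[𝕜] W)) C) :
    FiniteDimensional 𝕜 (ker (Lstar : StrongDual 𝕜 W →ₗ[𝕜] StrongDual 𝕜 V)) :=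
  FiniteDimensional.of_injective _ (injective_restrict_ker_adjoint hLstar hcompl)

theorem finrank_ker_adjoint_le (hLstar : ∀ F φ, Lstar F φ = F (L φ))
    (hcompl : IsCompl (range (L : V →ₗ[𝕜] W)) C) :
    finrank 𝕜 (ker (Lstar : StrongDual 𝕜 W →ₗ[𝕜] StrongDual 𝕜 V)) ≤ finrank 𝕜 C :=
  (LinearMap.finrank_le_finrank_of_injective (injective_restrict_ker_adjoint hLstar hcompl)).trans
    Subspace.dual_finrank_eq.le

theorem map_ker_eq_ker_adjoint (hT : Function.Injective T)
    (hsymm : ∀ φ ψ, T ψ (L φ) = T φ (L ψ)) (hLstar : ∀ F φ, Lstar F φ = F (L φ))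
    (hcompl : IsCompl (range (L : V →ₗ[𝕜] W)) C)
    (hidx : finrank 𝕜 C = finrank 𝕜 (ker (L : V →ₗ[𝕜] W))) :
    (ker (L : V →ₗ[𝕜] W)).map (T : V →ₗ[𝕜] StrongDual 𝕜 W) =
      ker (Lstar : StrongDual 𝕜 W →ₗ[𝕜] StrongDual 𝕜 V) := by
  have := finiteDimensional_ker_adjoint hLstar hcompl
  refine Submodule.eq_of_le_of_finrank_le (map_ker_le_ker_adjoint hsymm hLstar) ?_
  calc _ ≤ finrank 𝕜 C := finrank_ker_adjoint_le hLstar hcompl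
    _ = finrank 𝕜 (ker (L : V →ₗ[𝕜] W)) := hidx
    _ = _ := (Submodule.equivMapOfInjective _ hT _).finrank_eq

theorem surjective_restrict_ker_adjoint (hT : Function.Injective T)
    (hsymm : ∀ φ ψ, T ψ (L φ) = T φ (L ψ)) (hLstar : ∀ F φ, Lstar F φ = F (L φ))
    (hcompl : IsCompl (range (L : V →ₗ[𝕜] W)) C)
    (hidx : finrank 𝕜 C = finrank 𝕜 (ker (L : V →ₗ[𝕜] W))) :
    Function.Surjective ((StrongDual.restrict 𝕜 C).domRestrict
      (ker (Lstar : StrongDual 𝕜 W →ₗ[𝕜] StrongDual 𝕜 V))) := by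
  -- The group structure that `StrongDual 𝕜 W` inherits from its norm is not reducibly the one
  -- underlying `ker Lstar`, and unifying the two times out.
  let _ : AddCommGroup (StrongDual 𝕜 W) := ContinuousLinearMap.addCommGroup
  have := finiteDimensional_ker_adjoint hLstar hcompl
  have hdim : finrank 𝕜 (ker (Lstar : StrongDual 𝕜 W →ₗ[𝕜] StrongDual 𝕜 V)) =
      finrank 𝕜 (Module.Dual 𝕜 C) := by
    rw [← map_ker_eq_ker_adjoint hT hsymm hLstar hcompl hidx, Subspace.dual_finrank_eq, hidx]
    exact (Submodule.equivMapOfInjective _ hT _).finrank_eq.symm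
  exact (LinearMap.injective_iff_surjective_of_finrank_eq_finrank hdim).1
    (injective_restrict_ker_adjoint hLstar hcompl)

theorem mem_range_of_forall_mem_ker (hT : Function.Injective T)
    (hsymm : ∀ φ ψ, T ψ (L φ) = T φ (L ψ)) (hLstar : ∀ F φ, Lstar F φ = F (L φ))
    (hcompl : IsCompl (range (L : V →ₗ[𝕜] W)) C)
    (hidx : finrank 𝕜 C = finrank 𝕜 (ker (L : V →ₗ[𝕜] W)))
    {w : W} (hw : ∀ v ∈ ker (L : V →ₗ[𝕜] W), T v w = 0) :
    w ∈ range (L : V →ₗ[𝕜] W) := by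
  obtain ⟨_, ⟨φ, rfl⟩, c, hc, rfl⟩ :=
    Submodule.mem_sup.1 (hcompl.sup_eq_top ▸ Submodule.mem_top : w ∈ _ ⊔ C)
  have hcker : ∀ v ∈ ker (L : V →ₗ[𝕜] W), T v c = 0 := fun v hv => by
    simpa [apply_eq_zero_of_mem_ker hsymm hv] using hw v hv
  suffices (⟨c, hc⟩ : C) = 0 by
    rw [show c = 0 from congrArg Subtype.val this, add_zero]
    exact mem_range_self _ φ
  refine (Module.forall_dual_apply_eq_zero_iff 𝕜 _).1 fun f => ?_
  obtain ⟨⟨F, hF⟩, rfl⟩ := surjective_restrict_ker_adjoint hT hsymm hLstar hcompl hidx f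
  rw [← map_ker_eq_ker_adjoint hT hsymm hLstar hcompl hidx] at hF
  obtain ⟨v, hv, rfl⟩ := hF
  exact hcker v hv

theorem range_eq_setOf_forall_mem_ker (hT : Function.Injective T)
    (hsymm : ∀ φ ψ, T ψ (L φ) = T φ (L ψ)) (hLstar : ∀ F φ, Lstar F φ = F (L φ))
    (hcompl : IsCompl (range (L : V →ₗ[𝕜] W)) C)
    (hidx : finrank 𝕜 C = finrank 𝕜 (ker (L : V →ₗ[𝕜] W))) :
    (range (L : V →ₗ[𝕜] W) : Set W) = {w | ∀ v ∈ ker (L : V →ₗ[𝕜] W), T v w = 0} := by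
  ext w
  refine ⟨?_, mem_range_of_forall_mem_ker hT hsymm hLstar hcompl hidx⟩
  rintro ⟨φ, rfl⟩ v hv
  exact apply_eq_zero_of_mem_ker hsymm hv φ

end SymmetricOperator

theorem stmt_3_general
    {V Z : Type*} [NormedAddCommGroup V] [NormedSpace ℝ V]
    [NormedAddCommGroup Z] [NormedSpace ℝ Z]
    (i : V →L[ℝ] Z) (hi : Function.Injective i)
    (L : V →L[ℝ] StrongDual ℝ Z)
    (hsymm : ∀ φ ψ : V, L φ (i ψ) = L ψ (i φ))
    (C : Submodule ℝ (StrongDual ℝ Z))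
    (hcompl : IsCompl (LinearMap.range (L : V →ₗ[ℝ] StrongDual ℝ Z)) C)
    (hC : FiniteDimensional ℝ C)
    (hidx : Module.finrank ℝ C = Module.finrank ℝ (LinearMap.ker (L : V →ₗ[ℝ] StrongDual ℝ Z)))
    (P : V →L[ℝ] V)
    (hrange : LinearMap.range (P : V →ₗ[ℝ] V) = LinearMap.ker (L : V →ₗ[ℝ] StrongDual ℝ Z))
    (Lstar : StrongDual ℝ (StrongDual ℝ Z) →L[ℝ] StrongDual ℝ V)
    (hLstar : ∀ (F : StrongDual ℝ (StrongDual ℝ Z)) (φ : V),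
      Lstar F φ = F (L φ))
    (J : V → StrongDual ℝ (StrongDual ℝ Z))
    (hJ : ∀ v : V, J v = NormedSpace.inclusionInDoubleDual ℝ Z (i v)) :
    J '' (LinearMap.range (P : V →ₗ[ℝ] V) : Set V) = (LinearMap.ker (Lstar : StrongDual ℝ (StrongDual ℝ Z) →ₗ[ℝ] StrongDual ℝ V) : Set _) ∧
      (LinearMap.range (L : V →ₗ[ℝ] StrongDual ℝ Z) : Set (StrongDual ℝ Z)) =
        {w : StrongDual ℝ Z | ∀ v : V, w (i (P v)) = 0} := by
  set T := (inclusionInDoubleDual ℝ Z).comp i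
  have hT : Function.Injective T := (inclusionInDoubleDualLi ℝ).injective.comp hi
  have hTsymm : ∀ φ ψ, T ψ (L φ) = T φ (L ψ) := hsymm
  constructor
  · rw [hrange, ← map_ker_eq_ker_adjoint hT hTsymm hLstar hcompl hidx, Submodule.map_coe]
    exact Set.image_congr fun v _ => hJ v
  · rw [range_eq_setOf_forall_mem_ker hT hTsymm hLstar hcompl hidx, ← hrange]
    simp [T]

/-- Let `Z` be a Banach space, `V ↪ Z` continuously embedded (via `i`), `W = Z*`, and
`L : V → W` a bounded, symmetric linear operator which is Fredholm of index zero
(kernel finite dimensional, closed range, and a finite dimensional complement `C` of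
the range with `dim C = dim ker L`).  Let `P : V → V` be a continuous projection with
image `V₀ = ker L`, and `J : V → Z**` the canonical injection restricted to `V`.
Then `J (Im P) = ker L*` and `Im L = ker P* ∩ W`, where
`ker P* ∩ W = { w ∈ W : w (P v) = 0 for all v ∈ V }` is computed inside `V*` via the
embedding `W ↪ V*`. -/
theorem stmt_3
    {V Z : Type*} [NormedAddCommGroup V] [NormedSpace ℝ V] [CompleteSpace V]
    [NormedAddCommGroup Z] [NormedSpace ℝ Z] [CompleteSpace Z]
    (i : V →L[ℝ] Z) (hi : Function.Injective i)
    (L : V →L[ℝ] StrongDual ℝ Z)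
    (hsymm : ∀ φ ψ : V, L φ (i ψ) = L ψ (i φ))
    (hker : FiniteDimensional ℝ (LinearMap.ker (L : V →ₗ[ℝ] StrongDual ℝ Z)))
    (hclosed : IsClosed (LinearMap.range (L : V →ₗ[ℝ] StrongDual ℝ Z) : Set (StrongDual ℝ Z)))
    (C : Submodule ℝ (StrongDual ℝ Z))
    (hcompl : IsCompl (LinearMap.range (L : V →ₗ[ℝ] StrongDual ℝ Z)) C)
    (hC : FiniteDimensional ℝ C)
    (hidx : Module.finrank ℝ C = Module.finrank ℝ (LinearMap.ker (L : V →ₗ[ℝ] StrongDual ℝ Z)))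
    (P : V →L[ℝ] V) (hproj : P.comp P = P)
    (hrange : LinearMap.range (P : V →ₗ[ℝ] V) = LinearMap.ker (L : V →ₗ[ℝ] StrongDual ℝ Z))
    (Lstar : StrongDual ℝ (StrongDual ℝ Z) →L[ℝ] StrongDual ℝ V)
    (hLstar : ∀ (F : StrongDual ℝ (StrongDual ℝ Z)) (φ : V),
      Lstar F φ = F (L φ))
    (J : V → StrongDual ℝ (StrongDual ℝ Z))
    (hJ : ∀ v : V, J v = NormedSpace.inclusionInDoubleDual ℝ Z (i v)) :
    J '' (LinearMap.range (P : V →ₗ[ℝ] V) : Set V) = (LinearMap.ker (Lstar : StrongDual ℝ (StrongDual ℝ Z) →ₗ[ℝ] StrongDual ℝ V) : Set _) ∧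
      (LinearMap.range (L : V →ₗ[ℝ] StrongDual ℝ Z) : Set (StrongDual ℝ Z)) =
        {w : StrongDual ℝ Z | ∀ v : V, w (i (P v)) = 0} :=
  stmt_3_general i hi L hsymm C hcompl hC hidx P hrange Lstar hLstar J hJ
end

section
/- Let γ : S¹ → M ⊂ ℝⁿ be a smooth regular closed curve. For any C² normal field φ ∈ TM ∩ (Tγ)^⊥ along γ one has the identity ∇²φ = D_s²φ + (2⟨D_s φ, k⟩ + ⟨φ, D_s k⟩) τ − ⟨D_s φ, τ⟩ k, and there exists a constant C depending on γ and M such that ∫ |∂_s²φ|² ds ≤ C ∫ (|φ|² + |∇²φ|²) ds. Consequently, the bilinear form a(φ,ψ) = ∫ ⟨∇²φ, ∇²ψ⟩ + ⟨φ,ψ⟩ ds is coercive on the space of W^{2,2} normal fields: ∫ |φ|² + |∂_s φ|² + |∂_s²φ|² ds ≤ C a(φ,φ). -/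
open scoped InnerProductSpace
open Function

noncomputable section

variable {E : Type*} [NormedAddCommGroup E] [InnerProductSpace ℝ E]

/-- Arclength derivative `∂_s u = |γ'|⁻¹ ∂_x u` of a field `u` along the curve `γ`. -/
def sDeriv (γ u : ℝ → E) : ℝ → E := fun x => ‖deriv γ x‖⁻¹ • deriv u x

/-- Unit tangent `τ = ∂_s γ`. -/
def unitTangent (γ : ℝ → E) : ℝ → E := sDeriv γ γ

/-- Covariant derivative `D_s u = M^⊤(∂_s u)` along `γ` (with `P` the tangent
projections of the ambient manifold `M` along `γ`). -/
def covDeriv (P : ℝ → E →L[ℝ] E) (γ u : ℝ → E) : ℝ → E :=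
  fun x => P x (sDeriv γ u x)

/-- The normal connection `∇u = D_s u - ⟨D_s u, τ⟩ τ` along `γ` in `M`. -/
def normalDeriv (P : ℝ → E →L[ℝ] E) (γ u : ℝ → E) : ℝ → E :=
  fun x => covDeriv P γ u x -
    ⟪covDeriv P γ u x, unitTangent γ x⟫_ℝ • unitTangent γ x

/-- The geodesic curvature `k = D_s τ` of `γ` in `M`. -/
def geodCurv (P : ℝ → E →L[ℝ] E) (γ : ℝ → E) : ℝ → E :=
  covDeriv P γ (unitTangent γ)

namespace Stmt16
def sc (γ : ℝ → E) : ℝ → ℝ := fun x => ‖deriv γ x‖⁻¹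
def sd (γ : ℝ → E) (c : ℝ → ℝ) : ℝ → ℝ := fun x => sc γ x * deriv c x
variable {γ : ℝ → E} {P Q : ℝ → E →L[ℝ] E} {φ : ℝ → E}

-- ===== workhorse lemmas (already tested) =====
lemma SD_smul {c : ℝ → ℝ} {v : ℝ → E} {x : ℝ}
    (hc : DifferentiableAt ℝ c x) (hv : DifferentiableAt ℝ v x) :
    sDeriv γ (fun y => c y • v y) x = sd γ c x • v x + c x • sDeriv γ v x := by
  show sc γ x • deriv (fun y => c y • v y) x = _
  rw [deriv_fun_smul hc hv, smul_add]
  show _ = (sc γ x * deriv c x) • v x + c x • (sc γ x • deriv v x)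
  module

lemma SD_inner {u v : ℝ → E} {x : ℝ}
    (hu : DifferentiableAt ℝ u x) (hv : DifferentiableAt ℝ v x) :
    sd γ (fun y => ⟪u y, v y⟫_ℝ) x = ⟪u x, sDeriv γ v x⟫_ℝ + ⟪sDeriv γ u x, v x⟫_ℝ := by
  show sc γ x * deriv (fun y => ⟪u y, v y⟫_ℝ) x = _
  rw [(hu.hasDerivAt.inner ℝ hv.hasDerivAt).deriv]
  rw [mul_add]
  rw [show sc γ x * ⟪u x, deriv v x⟫_ℝ = ⟪u x, sc γ x • deriv v x⟫_ℝ from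
    (real_inner_smul_right _ _ _).symm]
  rw [show sc γ x * ⟪deriv u x, v x⟫_ℝ = ⟪sc γ x • deriv u x, v x⟫_ℝ from
    (real_inner_smul_left _ _ _).symm]
  rfl

lemma SD_sub {u v : ℝ → E} {x : ℝ}
    (hu : DifferentiableAt ℝ u x) (hv : DifferentiableAt ℝ v x) :
    sDeriv γ (fun y => u y - v y) x = sDeriv γ u x - sDeriv γ v x := by
  show sc γ x • deriv (fun y => u y - v y) x = _
  rw [deriv_fun_sub hu hv, smul_sub]; rfl

lemma sd_const {c : ℝ} {x : ℝ} : sd γ (fun _ => c) x = 0 := by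
  simp [sd]

lemma sd_congr {c c' : ℝ → ℝ} (h : c = c') {x : ℝ} : sd γ c x = sd γ c' x := by rw [h]

-- ===== smoothness =====
lemma contDiff_deriv_of_two (hφ : ContDiff ℝ 2 φ) : ContDiff ℝ 1 (deriv φ) := by
  have : ContDiff ℝ (1+1) φ := by norm_num; exact hφ
  exact (contDiff_succ_iff_deriv.mp this).2.2

lemma contDiff_sc' (hγ : ContDiff ℝ (↑(⊤:ℕ∞)) γ) (hreg : ∀ x, deriv γ x ≠ 0) :
    ContDiff ℝ (↑(⊤:ℕ∞)) (sc γ) :=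
  (((contDiff_infty_iff_deriv.mp hγ).2).norm ℝ hreg).inv
    (fun x => by simpa using (hreg x))

lemma contDiff_SDφ (hγ : ContDiff ℝ (↑(⊤:ℕ∞)) γ) (hreg : ∀ x, deriv γ x ≠ 0)
    (hφ : ContDiff ℝ 2 φ) : ContDiff ℝ 1 (sDeriv γ φ) :=
  (((contDiff_sc' hγ hreg).of_le (by exact_mod_cast le_top))).smul (contDiff_deriv_of_two hφ)

lemma contDiff_Dφ (hγ : ContDiff ℝ (↑(⊤:ℕ∞)) γ) (hreg : ∀ x, deriv γ x ≠ 0)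
    (hP : ContDiff ℝ (↑(⊤:ℕ∞)) fun x => (P x : E →L[ℝ] E))
    (hφ : ContDiff ℝ 2 φ) : ContDiff ℝ 1 (covDeriv P γ φ) :=
  (hP.of_le (by exact_mod_cast le_top)).clm_apply (contDiff_SDφ hγ hreg hφ)

lemma contDiff_T (hγ : ContDiff ℝ (↑(⊤:ℕ∞)) γ) (hreg : ∀ x, deriv γ x ≠ 0) :
    ContDiff ℝ (↑(⊤:ℕ∞)) (unitTangent γ) :=
  (contDiff_sc' hγ hreg).smul (contDiff_infty_iff_deriv.mp hγ).2

lemma contDiff_SD_of_inf {u : ℝ → E} (hγ : ContDiff ℝ (↑(⊤:ℕ∞)) γ)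
    (hreg : ∀ x, deriv γ x ≠ 0) (hu : ContDiff ℝ (↑(⊤:ℕ∞)) u) :
    ContDiff ℝ (↑(⊤:ℕ∞)) (sDeriv γ u) :=
  (contDiff_sc' hγ hreg).smul (contDiff_infty_iff_deriv.mp hu).2

lemma contDiff_k (hγ : ContDiff ℝ (↑(⊤:ℕ∞)) γ) (hreg : ∀ x, deriv γ x ≠ 0)
    (hP : ContDiff ℝ (↑(⊤:ℕ∞)) fun x => (P x : E →L[ℝ] E)) :
    ContDiff ℝ (↑(⊤:ℕ∞)) (geodCurv P γ) :=
  hP.clm_apply (contDiff_SD_of_inf hγ hreg (contDiff_T hγ hreg))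

-- ===== Part 1 identity =====
lemma identity (hγ : ContDiff ℝ (↑(⊤:ℕ∞)) γ)
    (hreg : ∀ x, deriv γ x ≠ 0)
    (hP : ContDiff ℝ (↑(⊤:ℕ∞)) fun x => (P x : E →L[ℝ] E))
    (hPidem : ∀ x, (P x).comp (P x) = P x)
    (hPsymm : ∀ x u v, ⟪P x u, v⟫_ℝ = ⟪u, P x v⟫_ℝ)
    (hPtan : ∀ x, P x (deriv γ x) = deriv γ x)
    (hφ : ContDiff ℝ 2 φ)
    (hφP : ∀ x, P x (φ x) = φ x) (hφo : ∀ x, ⟪φ x, deriv γ x⟫_ℝ = 0) (x : ℝ) :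
    normalDeriv P γ (normalDeriv P γ φ) x =
      covDeriv P γ (covDeriv P γ φ) x
      + (2 * ⟪covDeriv P γ φ x, geodCurv P γ x⟫_ℝ
          + ⟪φ x, covDeriv P γ (geodCurv P γ) x⟫_ℝ) • unitTangent γ x
      - ⟪covDeriv P γ φ x, unitTangent γ x⟫_ℝ • geodCurv P γ x := by
  set T := unitTangent γ with hT
  set k := geodCurv P γ with hk
  set Dφ := covDeriv P γ φ with hDφdef
  set a : ℝ → ℝ := fun y => ⟪Dφ y, T y⟫_ℝ with ha
  -- pointwise projection facts
  have hPP : ∀ y v, P y (P y v) = P y v := fun y v => by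
    rw [← ContinuousLinearMap.comp_apply, hPidem y]
  have hPT : ∀ y, P y (T y) = T y := fun y => by
    show P y (sc γ y • deriv γ y) = _
    rw [map_smul, hPtan y]; rfl
  -- differentiability package
  have hdφ : DifferentiableAt ℝ φ x := (hφ.differentiable (by norm_num)).differentiableAt
  have hdT : ∀ y, DifferentiableAt ℝ T y := fun y =>
    ((contDiff_T hγ hreg).differentiable (by simp)).differentiableAt
  have hdSDT : DifferentiableAt ℝ (sDeriv γ T) x :=
    ((contDiff_SD_of_inf hγ hreg (contDiff_T hγ hreg)).differentiable
      (by simp)).differentiableAt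
  have hdk : ∀ y, DifferentiableAt ℝ k y := fun y =>
    ((contDiff_k hγ hreg hP).differentiable (by simp)).differentiableAt
  have hdDφ : ∀ y, DifferentiableAt ℝ Dφ y := fun y =>
    ((contDiff_Dφ hγ hreg hP hφ).differentiable one_ne_zero).differentiableAt
  have hda : DifferentiableAt ℝ a x :=
    ((hdDφ x).inner ℝ (hdT x))
  -- (F1) ⟪T,T⟫ = 1
  have hTT : ∀ y, ⟪T y, T y⟫_ℝ = 1 := fun y => by
    rw [real_inner_self_eq_norm_sq]
    have : ‖T y‖ = 1 := by
      show ‖sc γ y • deriv γ y‖ = 1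
      rw [norm_smul]
      simp [sc, norm_pos_iff.mpr (hreg y), inv_mul_cancel₀ (norm_ne_zero_iff.mpr (hreg y))]
    rw [this]; norm_num
  -- ⟪SDT, T⟫ = 0
  have hSDT_T : ∀ y, ⟪sDeriv γ T y, T y⟫_ℝ = 0 := fun y => by
    have h0 : sd γ (fun z => ⟪T z, T z⟫_ℝ) y = 0 := by
      rw [sd_congr (funext hTT)]; exact sd_const
    rw [SD_inner (hdT y) (hdT y)] at h0
    rw [real_inner_comm] at h0
    linarith
  -- ⟪k, T⟫ = 0
  have hkT : ∀ y, ⟪k y, T y⟫_ℝ = 0 := fun y => by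
    show ⟪P y (sDeriv γ T y), T y⟫_ℝ = 0
    rw [hPsymm, hPT, hSDT_T]
  -- ⟪φ, T⟫ = 0
  have hφT : ∀ y, ⟪φ y, T y⟫_ℝ = 0 := fun y => by
    show ⟪φ y, sc γ y • deriv γ y⟫_ℝ = 0
    rw [real_inner_smul_right, hφo y, mul_zero]
  -- a = ⟪SDφ, T⟫ and a = -⟪φ, k⟫
  have haSD : ∀ y, a y = ⟪sDeriv γ φ y, T y⟫_ℝ := fun y => by
    show ⟪P y (sDeriv γ φ y), T y⟫_ℝ = _
    rw [hPsymm, hPT]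
  have hφdiff : ∀ y, DifferentiableAt ℝ φ y := fun y =>
    (hφ.differentiable (by norm_num)).differentiableAt
  have haφk : a = fun y => -⟪φ y, k y⟫_ℝ := by
    funext y
    have h0 : sd γ (fun z => ⟪φ z, T z⟫_ℝ) y = 0 := by
      rw [sd_congr (funext hφT)]; exact sd_const
    rw [SD_inner (hφdiff y) (hdT y)] at h0
    have : ⟪φ y, sDeriv γ T y⟫_ℝ = ⟪φ y, k y⟫_ℝ := by
      conv_lhs => rw [← hφP y]
      rw [hPsymm]; rfl
    rw [this] at h0
    rw [haSD y]
    linarith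
  -- key inner identities
  have hDφk : ∀ y, ⟪sDeriv γ φ y, k y⟫_ℝ = ⟪Dφ y, k y⟫_ℝ := fun y => by
    show _ = ⟪P y (sDeriv γ φ y), k y⟫_ℝ
    rw [hPsymm]
    show ⟪sDeriv γ φ y, P y (sDeriv γ T y)⟫_ℝ = ⟪sDeriv γ φ y, P y (P y (sDeriv γ T y))⟫_ℝ
    rw [hPP]
  have hφSDk : ⟪φ x, sDeriv γ k x⟫_ℝ = ⟪φ x, covDeriv P γ k x⟫_ℝ := by
    conv_lhs => rw [← hφP x]
    rw [hPsymm]; rfl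
  -- sd a
  have hsda : sd γ a x = -(⟪Dφ x, k x⟫_ℝ + ⟪φ x, covDeriv P γ k x⟫_ℝ) := by
    rw [sd_congr haφk]
    have : (fun y => -⟪φ y, k y⟫_ℝ) = fun y => (0:ℝ) - ⟪φ y, k y⟫_ℝ := by
      funext y; ring
    rw [sd_congr this]
    show sc γ x * deriv (fun y => (0:ℝ) - ⟪φ y, k y⟫_ℝ) x = _
    rw [deriv_fun_sub (differentiableAt_const 0) ((hφdiff x).inner ℝ (hdk x))]
    rw [deriv_const]
    have : sc γ x * (0 - deriv (fun y => ⟪φ y, k y⟫_ℝ) x)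
        = -(sd γ (fun y => ⟪φ y, k y⟫_ℝ) x) := by
      show _ = -(sc γ x * _); ring
    rw [this, SD_inner (hφdiff x) (hdk x), hDφk x, hφSDk]
    ring
  -- sd a via definition of a
  have hsda2 : sd γ a x = ⟪Dφ x, sDeriv γ T x⟫_ℝ + ⟪sDeriv γ Dφ x, T x⟫_ℝ :=
    SD_inner (hdDφ x) (hdT x)
  have hDφSDT : ⟪Dφ x, sDeriv γ T x⟫_ℝ = ⟪Dφ x, k x⟫_ℝ := by
    have h1 : ⟪Dφ x, sDeriv γ T x⟫_ℝ = ⟪sDeriv γ φ x, P x (sDeriv γ T x)⟫_ℝ :=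
      hPsymm x _ _
    rw [h1, show P x (sDeriv γ T x) = k x from rfl, hDφk x]
  have hD2T : ⟪covDeriv P γ Dφ x, T x⟫_ℝ = sd γ a x - ⟪Dφ x, k x⟫_ℝ := by
    have : ⟪sDeriv γ Dφ x, T x⟫_ℝ = ⟪covDeriv P γ Dφ x, T x⟫_ℝ := by
      conv_lhs => rw [← hPT x]
      rw [← hPsymm]
      rfl
    rw [hsda2, hDφSDT, this]; ring
  -- sDeriv of ∇φ
  have hdaT : DifferentiableAt ℝ (fun y => a y • T y) x := hda.smul (hdT x)
  have hSDn : sDeriv γ (normalDeriv P γ φ) x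
      = sDeriv γ Dφ x - (sd γ a x • T x + a x • sDeriv γ T x) := by
    have h1 : normalDeriv P γ φ = fun y => Dφ y - a y • T y := rfl
    rw [h1, SD_sub (hdDφ x) hdaT, SD_smul hda (hdT x)]
  -- covDeriv of ∇φ
  have e1 : covDeriv P γ (normalDeriv P γ φ) x
      = covDeriv P γ Dφ x - (sd γ a x • T x + a x • k x) := by
    show P x (sDeriv γ (normalDeriv P γ φ) x) = _
    rw [hSDn, map_sub, map_add, map_smul, map_smul, hPT]
    rfl
  have e2 : ⟪covDeriv P γ (normalDeriv P γ φ) x, T x⟫_ℝ = -⟪Dφ x, k x⟫_ℝ := by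
    rw [e1, inner_sub_left, inner_add_left, real_inner_smul_left,
      real_inner_smul_left, hTT x, hkT x, hD2T]
    ring
  -- assemble
  show covDeriv P γ (normalDeriv P γ φ) x
      - ⟪covDeriv P γ (normalDeriv P γ φ) x, T x⟫_ℝ • T x = _
  rw [e2, e1, hsda]
  rw [show a x = ⟪Dφ x, T x⟫_ℝ from rfl]
  module

-- ============ Part 2 infrastructure ============

/-- projection onto tangent ∩ (span τ)ᗮ as CLM -/
def Nproj (γ : ℝ → E) (P : ℝ → E →L[ℝ] E) : ℝ → E →L[ℝ] E :=
  fun x => P x - ((innerSL ℝ (unitTangent γ x)).comp (P x)).smulRight (unitTangent γ x)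

/-- arclength derivative of a CLM-valued function -/
def clmSD (γ : ℝ → E) (Q : ℝ → E →L[ℝ] E) : ℝ → E →L[ℝ] E :=
  fun x => sc γ x • deriv (fun y => (Q y : E →L[ℝ] E)) x

lemma Nproj_apply (x : ℝ) (v : E) :
    Nproj γ P x v = P x v - ⟪unitTangent γ x, P x v⟫_ℝ • unitTangent γ x := by
  simp [Nproj, ContinuousLinearMap.sub_apply, ContinuousLinearMap.smulRight_apply,
    ContinuousLinearMap.comp_apply]

lemma normalDeriv_eq_N (u : ℝ → E) (x : ℝ) :
    normalDeriv P γ u x = Nproj γ P x (sDeriv γ u x) := by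
  rw [Nproj_apply]
  show P x (sDeriv γ u x) - ⟪P x (sDeriv γ u x), unitTangent γ x⟫_ℝ • unitTangent γ x = _
  rw [real_inner_comm]

lemma contDiff_Nproj (hγ : ContDiff ℝ (↑(⊤:ℕ∞)) γ) (hreg : ∀ x, deriv γ x ≠ 0)
    (hP : ContDiff ℝ (↑(⊤:ℕ∞)) fun x => (P x : E →L[ℝ] E)) :
    ContDiff ℝ (↑(⊤:ℕ∞)) (fun x => (Nproj γ P x : E →L[ℝ] E)) := by
  apply hP.sub
  apply (ContinuousLinearMap.smulRightL ℝ E E).isBoundedBilinearMap.contDiff.comp₂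
  · exact ((innerSL ℝ (E := E)).contDiff.comp (contDiff_T hγ hreg)).clm_comp hP
  · exact contDiff_T hγ hreg

lemma contDiff_clmSD {Q : ℝ → E →L[ℝ] E} (hγ : ContDiff ℝ (↑(⊤:ℕ∞)) γ)
    (hreg : ∀ x, deriv γ x ≠ 0)
    (hQ : ContDiff ℝ (↑(⊤:ℕ∞)) fun x => (Q x : E →L[ℝ] E)) :
    ContDiff ℝ (↑(⊤:ℕ∞)) (fun x => (clmSD γ Q x : E →L[ℝ] E)) :=
  (contDiff_sc' hγ hreg).smul (contDiff_infty_iff_deriv.mp hQ).2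

lemma SD_clm' {Q : ℝ → E →L[ℝ] E} {u : ℝ → E} {x : ℝ}
    (hQ : DifferentiableAt ℝ (fun y => (Q y : E →L[ℝ] E)) x)
    (hu : DifferentiableAt ℝ u x) :
    sDeriv γ (fun y => Q y (u y)) x = clmSD γ Q x (u x) + Q x (sDeriv γ u x) := by
  show sc γ x • deriv (fun y => Q y (u y)) x = _
  rw [(hQ.hasDerivAt.clm_apply hu.hasDerivAt).deriv, smul_add]
  congr 1
  show sc γ x • Q x (deriv u x) = Q x (sc γ x • deriv u x)
  rw [map_smul]

lemma SD_add' {u v : ℝ → E} {x : ℝ}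
    (hu : DifferentiableAt ℝ u x) (hv : DifferentiableAt ℝ v x) :
    sDeriv γ (fun y => u y + v y) x = sDeriv γ u x + sDeriv γ v x := by
  show sc γ x • deriv (fun y => u y + v y) x = _
  rw [deriv_fun_add hu hv, smul_add]; rfl

lemma sd_add {c d : ℝ → ℝ} {x : ℝ}
    (hc : DifferentiableAt ℝ c x) (hd : DifferentiableAt ℝ d x) :
    sd γ (fun y => c y + d y) x = sd γ c x + sd γ d x := by
  show sc γ x * deriv (fun y => c y + d y) x = _
  rw [deriv_fun_add hc hd, mul_add]; rfl

-- the remainder identity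
lemma remainder (hγ : ContDiff ℝ (↑(⊤:ℕ∞)) γ)
    (hreg : ∀ x, deriv γ x ≠ 0)
    (hP : ContDiff ℝ (↑(⊤:ℕ∞)) fun x => (P x : E →L[ℝ] E))
    (hPidem : ∀ x, (P x).comp (P x) = P x)
    (hPsymm : ∀ x u v, ⟪P x u, v⟫_ℝ = ⟪u, P x v⟫_ℝ)
    (hPtan : ∀ x, P x (deriv γ x) = deriv γ x)
    (hφ : ContDiff ℝ 2 φ)
    (hφP : ∀ x, P x (φ x) = φ x) (hφo : ∀ x, ⟪φ x, deriv γ x⟫_ℝ = 0) (x : ℝ) :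
    sDeriv γ (sDeriv γ φ) x
      = normalDeriv P γ (normalDeriv P γ φ) x
        + clmSD γ (clmSD γ P) x (φ x) + (2:ℝ) • clmSD γ P x (sDeriv γ φ x)
        - (2 * ⟪sDeriv γ φ x, sDeriv γ (unitTangent γ) x⟫_ℝ
            + ⟪φ x, sDeriv γ (sDeriv γ (unitTangent γ)) x⟫_ℝ) • unitTangent γ x
        - Nproj γ P x (clmSD γ (Nproj γ P) x (sDeriv γ φ x)) := by
  set T := unitTangent γ with hTdef
  have hPP : ∀ y v, P y (P y v) = P y v := fun y v => by
    rw [← ContinuousLinearMap.comp_apply, hPidem y]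
  have hPT : ∀ y, P y (T y) = T y := fun y => by
    show P y (sc γ y • deriv γ y) = _
    rw [map_smul, hPtan y]; rfl
  have hTT : ∀ y, ⟪T y, T y⟫_ℝ = 1 := fun y => by
    rw [real_inner_self_eq_norm_sq]
    have : ‖T y‖ = 1 := by
      show ‖sc γ y • deriv γ y‖ = 1
      rw [norm_smul]
      simp [sc, norm_pos_iff.mpr (hreg y), inv_mul_cancel₀ (norm_ne_zero_iff.mpr (hreg y))]
    rw [this]; norm_num
  -- differentiability
  have hφdiff : ∀ y, DifferentiableAt ℝ φ y := fun y =>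
    (hφ.differentiable (by norm_num)).differentiableAt
  have hdT : ∀ y, DifferentiableAt ℝ T y := fun y =>
    ((contDiff_T hγ hreg).differentiable (by simp)).differentiableAt
  have hdSDT : ∀ y, DifferentiableAt ℝ (sDeriv γ T) y := fun y =>
    ((contDiff_SD_of_inf hγ hreg (contDiff_T hγ hreg)).differentiable
      (by simp)).differentiableAt
  have hdSDφ : ∀ y, DifferentiableAt ℝ (sDeriv γ φ) y := fun y =>
    ((contDiff_SDφ hγ hreg hφ).differentiable one_ne_zero).differentiableAt
  have hdP : ∀ y, DifferentiableAt ℝ (fun z => (P z : E →L[ℝ] E)) y := fun y =>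
    (hP.differentiable (by simp)).differentiableAt
  have hdSP : ∀ y, DifferentiableAt ℝ (fun z => (clmSD γ P z : E →L[ℝ] E)) y := fun y =>
    ((contDiff_clmSD hγ hreg hP).differentiable (by simp)).differentiableAt
  have hdN : ∀ y, DifferentiableAt ℝ (fun z => (Nproj γ P z : E →L[ℝ] E)) y := fun y =>
    ((contDiff_Nproj hγ hreg hP).differentiable (by simp)).differentiableAt
  -- N idempotent
  have hNN : ∀ y v, Nproj γ P y (Nproj γ P y v) = Nproj γ P y v := by
    intro y v
    rw [Nproj_apply, Nproj_apply, ← hTdef, map_sub, map_smul, hPP, hPT,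
      inner_sub_right, real_inner_smul_right, hTT]
    have h1 : ⟪T y, P y v⟫_ℝ - ⟪T y, P y v⟫_ℝ * 1 = 0 := by ring
    rw [h1, zero_smul, sub_zero]
  -- second-derivative expansion: ∂²φ = SSPφ + 2 SP ∂φ + P ∂²φ
  have hfun : sDeriv γ φ = fun y => clmSD γ P y (φ y) + P y (sDeriv γ φ y) := by
    funext y
    have hid : φ = fun z => P z (φ z) := funext fun z => (hφP z).symm
    conv_lhs => rw [hid]
    exact SD_clm' (hdP y) (hφdiff y)
  have e_second : sDeriv γ (sDeriv γ φ) x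
      = clmSD γ (clmSD γ P) x (φ x) + (2:ℝ) • clmSD γ P x (sDeriv γ φ x)
        + P x (sDeriv γ (sDeriv γ φ) x) := by
    conv_lhs => rw [show sDeriv γ (sDeriv γ φ) x
      = sDeriv γ (fun y => clmSD γ P y (φ y) + P y (sDeriv γ φ y)) x by rw [← hfun]]
    rw [SD_add' ((hdSP x).clm_apply (hφdiff x)) ((hdP x).clm_apply (hdSDφ x)),
      SD_clm' (hdSP x) (hφdiff x), SD_clm' (hdP x) (hdSDφ x)]
    module
  -- ∇²φ = N(SN ∂φ) + N(∂²φ)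
  have e_N2 : normalDeriv P γ (normalDeriv P γ φ) x
      = Nproj γ P x (clmSD γ (Nproj γ P) x (sDeriv γ φ x))
        + Nproj γ P x (sDeriv γ (sDeriv γ φ) x) := by
    rw [normalDeriv_eq_N]
    have hψ : normalDeriv P γ φ = fun y => Nproj γ P y (sDeriv γ φ y) :=
      funext fun y => normalDeriv_eq_N _ _
    conv_lhs => rw [hψ]
    rw [SD_clm' (hdN x) (hdSDφ x), map_add, hNN]
  -- tangential component of ∂²φ
  have hφT : ∀ y, ⟪φ y, T y⟫_ℝ = 0 := fun y => by
    show ⟪φ y, sc γ y • deriv γ y⟫_ℝ = 0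
    rw [real_inner_smul_right, hφo y, mul_zero]
  have hb : ∀ y, ⟪φ y, sDeriv γ T y⟫_ℝ + ⟪sDeriv γ φ y, T y⟫_ℝ = 0 := fun y => by
    have h0 : sd γ (fun z => ⟪φ z, T z⟫_ℝ) y = 0 := by
      rw [sd_congr (funext hφT)]; exact sd_const
    rw [SD_inner (hφdiff y) (hdT y)] at h0
    linarith
  have hC7 : ⟪sDeriv γ (sDeriv γ φ) x, T x⟫_ℝ
      = -(2 * ⟪sDeriv γ φ x, sDeriv γ T x⟫_ℝ + ⟪φ x, sDeriv γ (sDeriv γ T) x⟫_ℝ) := by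
    have h0 : sd γ (fun z => ⟪φ z, sDeriv γ T z⟫_ℝ + ⟪sDeriv γ φ z, T z⟫_ℝ) x = 0 := by
      rw [sd_congr (funext hb)]; exact sd_const
    rw [sd_add ((hφdiff x).inner ℝ (hdSDT x)) ((hdSDφ x).inner ℝ (hdT x)),
      SD_inner (hφdiff x) (hdSDT x), SD_inner (hdSDφ x) (hdT x)] at h0
    have hcomm : ⟪sDeriv γ φ x, sDeriv γ T x⟫_ℝ = ⟪sDeriv γ T x, sDeriv γ φ x⟫_ℝ :=
      real_inner_comm _ _
    linarith [hcomm]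
  -- (I - N)∂²φ
  have e_IN : sDeriv γ (sDeriv γ φ) x - Nproj γ P x (sDeriv γ (sDeriv γ φ) x)
      = clmSD γ (clmSD γ P) x (φ x) + (2:ℝ) • clmSD γ P x (sDeriv γ φ x)
        - (2 * ⟪sDeriv γ φ x, sDeriv γ T x⟫_ℝ
            + ⟪φ x, sDeriv γ (sDeriv γ T) x⟫_ℝ) • T x := by
    have hTP : ⟪T x, P x (sDeriv γ (sDeriv γ φ) x)⟫_ℝ
        = ⟪sDeriv γ (sDeriv γ φ) x, T x⟫_ℝ := by
      rw [← hPsymm, hPT, real_inner_comm]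
    rw [Nproj_apply, ← hTdef, hTP, hC7]
    set D2 := sDeriv γ (sDeriv γ φ) x with hD2
    have e3 : P x D2 = D2 - clmSD γ (clmSD γ P) x (φ x)
        - (2:ℝ) • clmSD γ P x (sDeriv γ φ x) := by
      conv_rhs => rw [e_second]
      abel
    rw [e3]
    module
  -- assemble
  have e_IN' := sub_eq_iff_eq_add.mp e_IN
  rw [e_N2]
  conv_lhs => rw [e_IN']
  module

-- ============ pointwise norm bound ============

lemma pointwise_bound (hγ : ContDiff ℝ (↑(⊤:ℕ∞)) γ)
    (hreg : ∀ x, deriv γ x ≠ 0)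
    (hP : ContDiff ℝ (↑(⊤:ℕ∞)) fun x => (P x : E →L[ℝ] E))
    (hPidem : ∀ x, (P x).comp (P x) = P x)
    (hPsymm : ∀ x u v, ⟪P x u, v⟫_ℝ = ⟪u, P x v⟫_ℝ)
    (hPtan : ∀ x, P x (deriv γ x) = deriv γ x)
    (hφ : ContDiff ℝ 2 φ)
    (hφP : ∀ x, P x (φ x) = φ x) (hφo : ∀ x, ⟪φ x, deriv γ x⟫_ℝ = 0) (x : ℝ) :
    ‖sDeriv γ (sDeriv γ φ) x‖ ≤ ‖normalDeriv P γ (normalDeriv P γ φ) x‖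
      + (‖clmSD γ (clmSD γ P) x‖ + ‖sDeriv γ (sDeriv γ (unitTangent γ)) x‖) * ‖φ x‖
      + (2*‖clmSD γ P x‖ + 2*‖sDeriv γ (unitTangent γ) x‖
          + ‖Nproj γ P x‖ * ‖clmSD γ (Nproj γ P) x‖) * ‖sDeriv γ φ x‖ := by
  rw [remainder hγ hreg hP hPidem hPsymm hPtan hφ hφP hφo x]
  set v1 := normalDeriv P γ (normalDeriv P γ φ) x
  set v2 := clmSD γ (clmSD γ P) x (φ x) with hv2
  set v3 := (2:ℝ) • clmSD γ P x (sDeriv γ φ x) with hv3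
  set v4 := (2 * ⟪sDeriv γ φ x, sDeriv γ (unitTangent γ) x⟫_ℝ
      + ⟪φ x, sDeriv γ (sDeriv γ (unitTangent γ)) x⟫_ℝ) • unitTangent γ x with hv4
  set v5 := Nproj γ P x (clmSD γ (Nproj γ P) x (sDeriv γ φ x)) with hv5
  have tri : ‖v1 + v2 + v3 - v4 - v5‖ ≤ ‖v1‖ + ‖v2‖ + ‖v3‖ + ‖v4‖ + ‖v5‖ := by
    calc ‖v1 + v2 + v3 - v4 - v5‖ ≤ ‖v1 + v2 + v3 - v4‖ + ‖v5‖ := norm_sub_le _ _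
      _ ≤ ‖v1 + v2 + v3‖ + ‖v4‖ + ‖v5‖ := by linarith [norm_sub_le (v1 + v2 + v3) v4]
      _ ≤ ‖v1 + v2‖ + ‖v3‖ + ‖v4‖ + ‖v5‖ := by linarith [norm_add_le (v1 + v2) v3]
      _ ≤ ‖v1‖ + ‖v2‖ + ‖v3‖ + ‖v4‖ + ‖v5‖ := by linarith [norm_add_le v1 v2]
  have h2 : ‖v2‖ ≤ ‖clmSD γ (clmSD γ P) x‖ * ‖φ x‖ :=
    (clmSD γ (clmSD γ P) x).le_opNorm _
  have h3 : ‖v3‖ ≤ 2 * (‖clmSD γ P x‖ * ‖sDeriv γ φ x‖) := by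
    rw [hv3, norm_smul]
    simp only [Real.norm_ofNat]
    have := (clmSD γ P x).le_opNorm (sDeriv γ φ x)
    nlinarith
  have hT1 : ‖unitTangent γ x‖ = 1 := by
    show ‖sc γ x • deriv γ x‖ = 1
    rw [norm_smul]
    simp [sc, norm_pos_iff.mpr (hreg x), inv_mul_cancel₀ (norm_ne_zero_iff.mpr (hreg x))]
  have h4 : ‖v4‖ ≤ 2 * ‖sDeriv γ (unitTangent γ) x‖ * ‖sDeriv γ φ x‖
      + ‖sDeriv γ (sDeriv γ (unitTangent γ)) x‖ * ‖φ x‖ := by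
    rw [hv4, norm_smul, hT1, mul_one, Real.norm_eq_abs]
    have i1 : |⟪sDeriv γ φ x, sDeriv γ (unitTangent γ) x⟫_ℝ|
        ≤ ‖sDeriv γ φ x‖ * ‖sDeriv γ (unitTangent γ) x‖ := abs_real_inner_le_norm _ _
    have i2 : |⟪φ x, sDeriv γ (sDeriv γ (unitTangent γ)) x⟫_ℝ|
        ≤ ‖φ x‖ * ‖sDeriv γ (sDeriv γ (unitTangent γ)) x‖ := abs_real_inner_le_norm _ _
    have := abs_add_le (2 * ⟪sDeriv γ φ x, sDeriv γ (unitTangent γ) x⟫_ℝ)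
      (⟪φ x, sDeriv γ (sDeriv γ (unitTangent γ)) x⟫_ℝ)
    rw [abs_mul] at this
    simp only [Nat.abs_ofNat] at this
    nlinarith [abs_nonneg (⟪sDeriv γ φ x, sDeriv γ (unitTangent γ) x⟫_ℝ)]
  have h5 : ‖v5‖ ≤ ‖Nproj γ P x‖ * ‖clmSD γ (Nproj γ P) x‖ * ‖sDeriv γ φ x‖ := by
    calc ‖v5‖ ≤ ‖Nproj γ P x‖ * ‖clmSD γ (Nproj γ P) x (sDeriv γ φ x)‖ :=
        (Nproj γ P x).le_opNorm _
      _ ≤ ‖Nproj γ P x‖ * (‖clmSD γ (Nproj γ P) x‖ * ‖sDeriv γ φ x‖) := by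
        have := (clmSD γ (Nproj γ P) x).le_opNorm (sDeriv γ φ x)
        nlinarith [norm_nonneg (Nproj γ P x)]
      _ = ‖Nproj γ P x‖ * ‖clmSD γ (Nproj γ P) x‖ * ‖sDeriv γ φ x‖ := by ring
  nlinarith [tri, h2, h3, h4, h5]

-- ============ sup bound on the coefficients ============

lemma exists_M (hγ : ContDiff ℝ (↑(⊤:ℕ∞)) γ) (hreg : ∀ x, deriv γ x ≠ 0)
    (hP : ContDiff ℝ (↑(⊤:ℕ∞)) fun x => (P x : E →L[ℝ] E)) :
    ∃ M : ℝ, 0 ≤ M ∧ ∀ x ∈ Set.Icc (0:ℝ) (2*Real.pi),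
      (‖clmSD γ (clmSD γ P) x‖ + ‖sDeriv γ (sDeriv γ (unitTangent γ)) x‖ ≤ M ∧
       2*‖clmSD γ P x‖ + 2*‖sDeriv γ (unitTangent γ) x‖
          + ‖Nproj γ P x‖ * ‖clmSD γ (Nproj γ P) x‖ ≤ M) := by
  have c1 : Continuous fun x => (clmSD γ (clmSD γ P) x : E →L[ℝ] E) :=
    (contDiff_clmSD hγ hreg (contDiff_clmSD hγ hreg hP)).continuous
  have c2 : Continuous (sDeriv γ (sDeriv γ (unitTangent γ))) :=
    (contDiff_SD_of_inf hγ hreg (contDiff_SD_of_inf hγ hreg (contDiff_T hγ hreg))).continuous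
  have c3 : Continuous fun x => (clmSD γ P x : E →L[ℝ] E) :=
    (contDiff_clmSD hγ hreg hP).continuous
  have c4 : Continuous (sDeriv γ (unitTangent γ)) :=
    (contDiff_SD_of_inf hγ hreg (contDiff_T hγ hreg)).continuous
  have c5 : Continuous fun x => (Nproj γ P x : E →L[ℝ] E) :=
    (contDiff_Nproj hγ hreg hP).continuous
  have c6 : Continuous fun x => (clmSD γ (Nproj γ P) x : E →L[ℝ] E) :=
    (contDiff_clmSD hγ hreg (contDiff_Nproj hγ hreg hP)).continuous
  set g : ℝ → ℝ := fun x => ‖clmSD γ (clmSD γ P) x‖ + ‖sDeriv γ (sDeriv γ (unitTangent γ)) x‖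
    with hg
  set h : ℝ → ℝ := fun x => 2*‖clmSD γ P x‖ + 2*‖sDeriv γ (unitTangent γ) x‖
      + ‖Nproj γ P x‖ * ‖clmSD γ (Nproj γ P) x‖ with hh
  have cg : Continuous g := (c1.norm.add c2.norm)
  have ch : Continuous h :=
    (((continuous_const.mul c3.norm).add (continuous_const.mul c4.norm)).add
      (c5.norm.mul c6.norm))
  obtain ⟨M, hM⟩ := isCompact_Icc.exists_bound_of_continuousOn
    (f := fun x => max (g x) (h x)) (cg.max ch).continuousOn
  refine ⟨M, ?_, ?_⟩
  · have h0 : (0:ℝ) ∈ Set.Icc (0:ℝ) (2*Real.pi) := by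
      constructor <;> [rfl; positivity]
    have := hM 0 h0
    have hg0 : 0 ≤ g 0 := by positivity
    have : max (g 0) (h 0) ≤ M := (le_abs_self _).trans (by simpa using this)
    have := le_max_left (g 0) (h 0)
    linarith
  · intro x hx
    have hb := hM x hx
    have : max (g x) (h x) ≤ M := (le_abs_self _).trans (by simpa using hb)
    exact ⟨(le_max_left _ _).trans this, (le_max_right _ _).trans this⟩

-- ============ periodicity ============

lemma periodic_deriv' {F : Type*} [NormedAddCommGroup F] [NormedSpace ℝ F]
    (f : ℝ → F) (c : ℝ) (h : Periodic f c) : Periodic (deriv f) c := fun x => by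
  have hf : (fun y => f (y + c)) = f := funext fun y => h y
  rw [← deriv_comp_add_const, hf]

lemma periodic_sc (hγper : Periodic γ (2*Real.pi)) : Periodic (sc γ) (2*Real.pi) :=
  fun x => by simp [sc, periodic_deriv' γ _ hγper x]

lemma periodic_SD {u : ℝ → E} (hγper : Periodic γ (2*Real.pi))
    (huper : Periodic u (2*Real.pi)) : Periodic (sDeriv γ u) (2*Real.pi) := fun x => by
  show sc γ (x + 2*Real.pi) • deriv u (x + 2*Real.pi) = sc γ x • deriv u x
  rw [periodic_sc hγper x, periodic_deriv' u _ huper x]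

-- ============ continuity helpers ============

lemma continuous_deriv_of_one {F : Type*} [NormedAddCommGroup F] [NormedSpace ℝ F]
    {u : ℝ → F} (hu : ContDiff ℝ 1 u) : Continuous (deriv u) := by
  have h : ContDiff ℝ (0+1) u := by norm_num; exact hu
  exact ((contDiff_succ_iff_deriv.mp h).2.2).continuous

lemma continuous_SD2 (hγ : ContDiff ℝ (↑(⊤:ℕ∞)) γ) (hreg : ∀ x, deriv γ x ≠ 0)
    (hφ : ContDiff ℝ 2 φ) : Continuous (sDeriv γ (sDeriv γ φ)) :=
  ((contDiff_sc' hγ hreg).continuous).smul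
    (continuous_deriv_of_one (contDiff_SDφ hγ hreg hφ))

lemma contDiff_normal_one (hγ : ContDiff ℝ (↑(⊤:ℕ∞)) γ) (hreg : ∀ x, deriv γ x ≠ 0)
    (hP : ContDiff ℝ (↑(⊤:ℕ∞)) fun x => (P x : E →L[ℝ] E))
    (hφ : ContDiff ℝ 2 φ) : ContDiff ℝ 1 (normalDeriv P γ φ) := by
  have h : normalDeriv P γ φ = fun x => Nproj γ P x (sDeriv γ φ x) :=
    funext fun x => normalDeriv_eq_N _ _
  rw [h]
  exact ((contDiff_Nproj hγ hreg hP).of_le (by exact_mod_cast le_top)).clm_apply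
    (contDiff_SDφ hγ hreg hφ)

lemma continuous_normal2 (hγ : ContDiff ℝ (↑(⊤:ℕ∞)) γ) (hreg : ∀ x, deriv γ x ≠ 0)
    (hP : ContDiff ℝ (↑(⊤:ℕ∞)) fun x => (P x : E →L[ℝ] E))
    (hφ : ContDiff ℝ 2 φ) : Continuous (normalDeriv P γ (normalDeriv P γ φ)) := by
  have h : normalDeriv P γ (normalDeriv P γ φ)
      = fun x => Nproj γ P x (sDeriv γ (normalDeriv P γ φ) x) :=
    funext fun x => normalDeriv_eq_N _ _
  rw [h]
  have h1 : Continuous (sDeriv γ (normalDeriv P γ φ)) :=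
    ((contDiff_sc' hγ hreg).continuous).smul
      (continuous_deriv_of_one (contDiff_normal_one hγ hreg hP hφ))
  exact ((contDiff_zero.mpr ((contDiff_Nproj hγ hreg hP).continuous)).clm_apply
    (contDiff_zero.mpr h1)).continuous

-- ============ integration by parts ============

lemma ibp (hγ : ContDiff ℝ (↑(⊤:ℕ∞)) γ) (hreg : ∀ x, deriv γ x ≠ 0)
    (hγper : Periodic γ (2*Real.pi))
    (hφ : ContDiff ℝ 2 φ) (hφper : Periodic φ (2*Real.pi)) :
    ∫ x in (0:ℝ)..(2*Real.pi), ‖sDeriv γ φ x‖^2 * ‖deriv γ x‖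
      = - ∫ x in (0:ℝ)..(2*Real.pi), ⟪φ x, sDeriv γ (sDeriv γ φ) x⟫_ℝ * ‖deriv γ x‖ := by
  have hrc : Continuous fun x => ‖deriv γ x‖ :=
    ((contDiff_infty_iff_deriv.mp hγ).2.continuous).norm
  have hφc : Continuous φ := hφ.continuous
  have hSDφ1 : ContDiff ℝ 1 (sDeriv γ φ) := contDiff_SDφ hγ hreg hφ
  have hSDφc : Continuous (sDeriv γ φ) := hSDφ1.continuous
  have hSD2c : Continuous (sDeriv γ (sDeriv γ φ)) := continuous_SD2 hγ hreg hφ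
  set G1 : ℝ → ℝ := fun x => ‖sDeriv γ φ x‖^2 * ‖deriv γ x‖ with hG1
  set G2 : ℝ → ℝ := fun x => ⟪φ x, sDeriv γ (sDeriv γ φ) x⟫_ℝ * ‖deriv γ x‖ with hG2
  have iG1 : IntervalIntegrable G1 MeasureTheory.volume 0 (2*Real.pi) :=
    ((hSDφc.norm.pow 2).mul hrc).intervalIntegrable _ _
  have iG2 : IntervalIntegrable G2 MeasureTheory.volume 0 (2*Real.pi) :=
    ((hφc.inner hSD2c).mul hrc).intervalIntegrable _ _
  set F : ℝ → ℝ := fun x => ⟪φ x, sDeriv γ φ x⟫_ℝ with hF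
  have hdF : ∀ x, HasDerivAt F (G1 x + G2 x) x := by
    intro x
    have hdφ : DifferentiableAt ℝ φ x := (hφ.differentiable (by norm_num)).differentiableAt
    have hdSD : DifferentiableAt ℝ (sDeriv γ φ) x :=
      (hSDφ1.differentiable one_ne_zero).differentiableAt
    have h := hdφ.hasDerivAt.inner ℝ hdSD.hasDerivAt
    refine h.congr_deriv ?_
    have hrpos : (0:ℝ) < ‖deriv γ x‖ := norm_pos_iff.mpr (hreg x)
    have e1 : ⟪deriv φ x, sDeriv γ φ x⟫_ℝ = ‖deriv γ x‖⁻¹ * ‖deriv φ x‖^2 := by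
      show ⟪deriv φ x, ‖deriv γ x‖⁻¹ • deriv φ x⟫_ℝ = _
      rw [real_inner_smul_right, real_inner_self_eq_norm_sq]
    have e2 : G1 x = ‖deriv γ x‖⁻¹ * ‖deriv φ x‖^2 := by
      rw [hG1]
      show ‖(‖deriv γ x‖⁻¹ • deriv φ x)‖^2 * ‖deriv γ x‖ = _
      rw [norm_smul, Real.norm_eq_abs, abs_of_pos (by positivity)]
      field_simp
    have e3 : G2 x = ⟪φ x, deriv (sDeriv γ φ) x⟫_ℝ := by
      rw [hG2]
      show ⟪φ x, ‖deriv γ x‖⁻¹ • deriv (sDeriv γ φ) x⟫_ℝ * ‖deriv γ x‖ = _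
      rw [real_inner_smul_right]
      field_simp
    rw [e1, e2, e3]; ring
  have hint : ∫ x in (0:ℝ)..(2*Real.pi), (G1 x + G2 x) = F (2*Real.pi) - F 0 :=
    intervalIntegral.integral_eq_sub_of_hasDerivAt (fun x _ => hdF x) (iG1.add iG2)
  have hFper : F (2*Real.pi) = F 0 := by
    have h1 : φ (0 + 2*Real.pi) = φ 0 := hφper 0
    have h2 : sDeriv γ φ (0 + 2*Real.pi) = sDeriv γ φ 0 := periodic_SD hγper hφper 0
    rw [zero_add] at h1 h2
    rw [hF]
    show ⟪φ (2*Real.pi), sDeriv γ φ (2*Real.pi)⟫_ℝ = ⟪φ 0, sDeriv γ φ 0⟫_ℝ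
    rw [h1, h2]
  rw [intervalIntegral.integral_add iG1 iG2, hFper, sub_self] at hint
  linarith

end Stmt16

set_option maxHeartbeats 2000000 in
open Stmt16 in
/-- Let `γ : S¹ → M ⊂ ℝⁿ` be a smooth regular closed curve.  For any `C²` normal field
`φ` along `γ` one has
`∇²φ = D_s²φ + (2⟨D_sφ,k⟩ + ⟨φ,D_sk⟩) τ - ⟨D_sφ,τ⟩ k`, and there exists a constant
`C` (depending on `γ` and `M`) such that
`∫ |∂_s²φ|² ds ≤ C ∫ (|φ|² + |∇²φ|²) ds`; consequently the bilinear form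
`a(φ,ψ) = ∫ ⟨∇²φ,∇²ψ⟩ + ⟨φ,ψ⟩ ds` is coercive:
`∫ |φ|² + |∂_sφ|² + |∂_s²φ|² ds ≤ C a(φ,φ)`. -/
theorem stmt_16 (γ : ℝ → E) (P : ℝ → E →L[ℝ] E)
    (hγ : ContDiff ℝ (⊤ : ℕ∞) γ) (hγper : Periodic γ (2*Real.pi))
    (hreg : ∀ x, deriv γ x ≠ 0)
    (hP : ContDiff ℝ (⊤ : ℕ∞) fun x => (P x : E →L[ℝ] E))
    (hPidem : ∀ x, (P x).comp (P x) = P x)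
    (hPsymm : ∀ x u v, ⟪P x u, v⟫_ℝ = ⟪u, P x v⟫_ℝ)
    (hPtan : ∀ x, P x (deriv γ x) = deriv γ x) :
    (∀ φ : ℝ → E, ContDiff ℝ 2 φ → Periodic φ (2*Real.pi) →
      (∀ x, P x (φ x) = φ x) → (∀ x, ⟪φ x, deriv γ x⟫_ℝ = 0) →
      ∀ x, normalDeriv P γ (normalDeriv P γ φ) x =
        covDeriv P γ (covDeriv P γ φ) x
        + (2 * ⟪covDeriv P γ φ x, geodCurv P γ x⟫_ℝ
            + ⟪φ x, covDeriv P γ (geodCurv P γ) x⟫_ℝ) • unitTangent γ x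
        - ⟪covDeriv P γ φ x, unitTangent γ x⟫_ℝ • geodCurv P γ x) ∧
    (∃ C > (0:ℝ), ∀ φ : ℝ → E, ContDiff ℝ 2 φ → Periodic φ (2*Real.pi) →
      (∀ x, P x (φ x) = φ x) → (∀ x, ⟪φ x, deriv γ x⟫_ℝ = 0) →
      (∫ x in (0:ℝ)..(2*Real.pi), ‖sDeriv γ (sDeriv γ φ) x‖^2 * ‖deriv γ x‖
          ≤ C * ∫ x in (0:ℝ)..(2*Real.pi),
              (‖φ x‖^2 + ‖normalDeriv P γ (normalDeriv P γ φ) x‖^2) * ‖deriv γ x‖) ∧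
      (∫ x in (0:ℝ)..(2*Real.pi),
          (‖φ x‖^2 + ‖sDeriv γ φ x‖^2 + ‖sDeriv γ (sDeriv γ φ) x‖^2) * ‖deriv γ x‖
        ≤ C * ∫ x in (0:ℝ)..(2*Real.pi),
            (‖normalDeriv P γ (normalDeriv P γ φ) x‖^2 + ‖φ x‖^2) * ‖deriv γ x‖)) := by
  have hγ' : ContDiff ℝ (↑(⊤:ℕ∞)) γ := hγ.of_le (by simp)
  have hP' : ContDiff ℝ (↑(⊤:ℕ∞)) (fun x => (P x : E →L[ℝ] E)) := hP.of_le (by simp)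
  constructor
  · intro φ hφ _ hφP hφo x
    exact identity hγ' hreg hP' hPidem hPsymm hPtan hφ hφP hφo x
  obtain ⟨M, hM0, hM⟩ := exists_M hγ' hreg hP'
  have hπ : (0:ℝ) ≤ 2*Real.pi := by positivity
  set c : ℝ := 3*M^2 + 3 with hcdef
  have hc3 : (3:ℝ) ≤ c := by nlinarith
  have hcpos : (0:ℝ) < c := by linarith
  refine ⟨3 + 3*c + 2*c^2, by nlinarith, fun φ hφ hφper hφP hφo => ?_⟩
  have hrc : Continuous fun x => ‖deriv γ x‖ :=
    ((contDiff_infty_iff_deriv.mp hγ').2.continuous).norm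
  have hφc : Continuous φ := hφ.continuous
  have hSDφc : Continuous (sDeriv γ φ) := (contDiff_SDφ hγ' hreg hφ).continuous
  have hSD2c : Continuous (sDeriv γ (sDeriv γ φ)) := continuous_SD2 hγ' hreg hφ
  have hN2c : Continuous (normalDeriv P γ (normalDeriv P γ φ)) :=
    continuous_normal2 hγ' hreg hP' hφ
  -- integrability
  have iA : IntervalIntegrable (fun x => ‖φ x‖^2 * ‖deriv γ x‖)
      MeasureTheory.volume 0 (2*Real.pi) := ((hφc.norm.pow 2).mul hrc).intervalIntegrable _ _
  have iB : IntervalIntegrable (fun x => ‖sDeriv γ φ x‖^2 * ‖deriv γ x‖)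
      MeasureTheory.volume 0 (2*Real.pi) := ((hSDφc.norm.pow 2).mul hrc).intervalIntegrable _ _
  have iD : IntervalIntegrable (fun x => ‖sDeriv γ (sDeriv γ φ) x‖^2 * ‖deriv γ x‖)
      MeasureTheory.volume 0 (2*Real.pi) := ((hSD2c.norm.pow 2).mul hrc).intervalIntegrable _ _
  have iN : IntervalIntegrable
      (fun x => ‖normalDeriv P γ (normalDeriv P γ φ) x‖^2 * ‖deriv γ x‖)
      MeasureTheory.volume 0 (2*Real.pi) := ((hN2c.norm.pow 2).mul hrc).intervalIntegrable _ _
  set A := ∫ x in (0:ℝ)..(2*Real.pi), ‖φ x‖^2 * ‖deriv γ x‖ with hAdef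
  set B := ∫ x in (0:ℝ)..(2*Real.pi), ‖sDeriv γ φ x‖^2 * ‖deriv γ x‖ with hBdef
  set D := ∫ x in (0:ℝ)..(2*Real.pi), ‖sDeriv γ (sDeriv γ φ) x‖^2 * ‖deriv γ x‖ with hDdef
  set N := ∫ x in (0:ℝ)..(2*Real.pi),
    ‖normalDeriv P γ (normalDeriv P γ φ) x‖^2 * ‖deriv γ x‖ with hNdef
  have hA0 : 0 ≤ A := intervalIntegral.integral_nonneg hπ (fun u _ => by positivity)
  have hN0 : 0 ≤ N := intervalIntegral.integral_nonneg hπ (fun u _ => by positivity)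
  have hD0 : 0 ≤ D := intervalIntegral.integral_nonneg hπ (fun u _ => by positivity)
  -- pointwise bound and D ≤ c(N+A+B)
  have key1 : ∀ x ∈ Set.Icc (0:ℝ) (2*Real.pi),
      ‖sDeriv γ (sDeriv γ φ) x‖^2 * ‖deriv γ x‖
        ≤ c * (‖normalDeriv P γ (normalDeriv P γ φ) x‖^2 * ‖deriv γ x‖)
          + c * (‖φ x‖^2 * ‖deriv γ x‖) + c * (‖sDeriv γ φ x‖^2 * ‖deriv γ x‖) := by
    intro x hx
    obtain ⟨hg, hh⟩ := hM x hx
    have hpb := pointwise_bound hγ' hreg hP' hPidem hPsymm hPtan hφ hφP hφo x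
    have l1 : (‖clmSD γ (clmSD γ P) x‖ + ‖sDeriv γ (sDeriv γ (unitTangent γ)) x‖) * ‖φ x‖
        ≤ M * ‖φ x‖ := mul_le_mul_of_nonneg_right hg (norm_nonneg _)
    have l2 : (2*‖clmSD γ P x‖ + 2*‖sDeriv γ (unitTangent γ) x‖
          + ‖Nproj γ P x‖ * ‖clmSD γ (Nproj γ P) x‖) * ‖sDeriv γ φ x‖
        ≤ M * ‖sDeriv γ φ x‖ := mul_le_mul_of_nonneg_right hh (norm_nonneg _)
    have h1 : ‖sDeriv γ (sDeriv γ φ) x‖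
        ≤ ‖normalDeriv P γ (normalDeriv P γ φ) x‖ + M * ‖φ x‖ + M * ‖sDeriv γ φ x‖ := by
      linarith
    have h2 : ‖sDeriv γ (sDeriv γ φ) x‖^2
        ≤ c * ‖normalDeriv P γ (normalDeriv P γ φ) x‖^2 + c * ‖φ x‖^2
          + c * ‖sDeriv γ φ x‖^2 := by
      nlinarith [norm_nonneg (sDeriv γ (sDeriv γ φ) x),
        norm_nonneg (normalDeriv P γ (normalDeriv P γ φ) x),
        norm_nonneg (φ x), norm_nonneg (sDeriv γ φ x), hM0,
        sq_nonneg (‖normalDeriv P γ (normalDeriv P γ φ) x‖ - M * ‖φ x‖),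
        sq_nonneg (‖normalDeriv P γ (normalDeriv P γ φ) x‖ - M * ‖sDeriv γ φ x‖),
        sq_nonneg (M * ‖φ x‖ - M * ‖sDeriv γ φ x‖), h1]
    have hr0 : (0:ℝ) ≤ ‖deriv γ x‖ := norm_nonneg _
    nlinarith [mul_le_mul_of_nonneg_right h2 hr0]
  have hD1 : D ≤ c*N + c*A + c*B := by
    have hint : IntervalIntegrable (fun x =>
        c * (‖normalDeriv P γ (normalDeriv P γ φ) x‖^2 * ‖deriv γ x‖)
          + c * (‖φ x‖^2 * ‖deriv γ x‖) + c * (‖sDeriv γ φ x‖^2 * ‖deriv γ x‖))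
        MeasureTheory.volume 0 (2*Real.pi) :=
      ((iN.const_mul c).add (iA.const_mul c)).add (iB.const_mul c)
    have hmono := intervalIntegral.integral_mono_on hπ iD hint key1
    rw [intervalIntegral.integral_add ((iN.const_mul c).add (iA.const_mul c))
        (iB.const_mul c),
      intervalIntegral.integral_add (iN.const_mul c) (iA.const_mul c),
      intervalIntegral.integral_const_mul, intervalIntegral.integral_const_mul,
      intervalIntegral.integral_const_mul] at hmono
    exact hmono
  -- interpolation bounds on B
  have hibp : B = - ∫ x in (0:ℝ)..(2*Real.pi),
      ⟪φ x, sDeriv γ (sDeriv γ φ) x⟫_ℝ * ‖deriv γ x‖ :=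
    ibp hγ' hreg hγper hφ hφper
  have iI : IntervalIntegrable
      (fun x => ⟪φ x, sDeriv γ (sDeriv γ φ) x⟫_ℝ * ‖deriv γ x‖)
      MeasureTheory.volume 0 (2*Real.pi) := ((hφc.inner hSD2c).mul hrc).intervalIntegrable _ _
  have interp : ∀ e : ℝ, 0 < e → B ≤ e/2 * A + (1/(2*e)) * D := by
    intro e he
    have key2 : ∀ x ∈ Set.Icc (0:ℝ) (2*Real.pi),
        -(⟪φ x, sDeriv γ (sDeriv γ φ) x⟫_ℝ * ‖deriv γ x‖)
          ≤ e/2 * (‖φ x‖^2 * ‖deriv γ x‖)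
            + (1/(2*e)) * (‖sDeriv γ (sDeriv γ φ) x‖^2 * ‖deriv γ x‖) := by
      intro x _
      have hr0 : (0:ℝ) ≤ ‖deriv γ x‖ := norm_nonneg _
      have hi : -⟪φ x, sDeriv γ (sDeriv γ φ) x⟫_ℝ ≤ ‖φ x‖ * ‖sDeriv γ (sDeriv γ φ) x‖ :=
        (neg_le_abs _).trans (abs_real_inner_le_norm _ _)
      have h2e : (0:ℝ) < 2*e := by linarith
      have hpd : ‖φ x‖ * ‖sDeriv γ (sDeriv γ φ) x‖
          ≤ e/2 * ‖φ x‖^2 + (1/(2*e)) * ‖sDeriv γ (sDeriv γ φ) x‖^2 := by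
        have h1 : ‖φ x‖ * ‖sDeriv γ (sDeriv γ φ) x‖
            ≤ (e^2 * ‖φ x‖^2 + ‖sDeriv γ (sDeriv γ φ) x‖^2)/(2*e) := by
          rw [le_div_iff₀ h2e]
          nlinarith [sq_nonneg (e * ‖φ x‖ - ‖sDeriv γ (sDeriv γ φ) x‖)]
        have h2 : (e^2 * ‖φ x‖^2 + ‖sDeriv γ (sDeriv γ φ) x‖^2)/(2*e)
            = e/2 * ‖φ x‖^2 + (1/(2*e)) * ‖sDeriv γ (sDeriv γ φ) x‖^2 := by
          field_simp
        linarith [h1, h2.le, h2.ge]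
      nlinarith [mul_le_mul_of_nonneg_right hi hr0, mul_le_mul_of_nonneg_right hpd hr0]
    have hint2 : IntervalIntegrable (fun x => e/2 * (‖φ x‖^2 * ‖deriv γ x‖)
        + (1/(2*e)) * (‖sDeriv γ (sDeriv γ φ) x‖^2 * ‖deriv γ x‖))
        MeasureTheory.volume 0 (2*Real.pi) := (iA.const_mul _).add (iD.const_mul _)
    have iI' : IntervalIntegrable
        (fun x => -(⟪φ x, sDeriv γ (sDeriv γ φ) x⟫_ℝ * ‖deriv γ x‖))
        MeasureTheory.volume 0 (2*Real.pi) :=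
      (((hφc.inner hSD2c).mul hrc).neg).intervalIntegrable _ _
    have hmono := intervalIntegral.integral_mono_on hπ iI' hint2 key2
    rw [intervalIntegral.integral_neg,
      intervalIntegral.integral_add (iA.const_mul _) (iD.const_mul _),
      intervalIntegral.integral_const_mul, intervalIntegral.integral_const_mul] at hmono
    rw [hibp]
    exact hmono
  have hB1 := interp c hcpos
  have hB2 := interp 1 one_pos
  clear_value A B D N c
  have hcB : c * B ≤ c^2/2 * A + 1/2 * D := by
    have h := mul_le_mul_of_nonneg_left hB1 hcpos.le
    have he : c * (c/2 * A + (1/(2*c)) * D) = c^2/2 * A + 1/2 * D := by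
      field_simp
    linarith [he.le, he.ge]
  have hDfin : D ≤ 2*c*N + (2*c + c^2)*A := by linarith
  constructor
  · -- first inequality
    have hsum1 : ∫ x in (0:ℝ)..(2*Real.pi),
        (‖φ x‖^2 + ‖normalDeriv P γ (normalDeriv P γ φ) x‖^2) * ‖deriv γ x‖
        = A + N := by
      rw [hAdef, hNdef, ← intervalIntegral.integral_add iA iN]
      apply intervalIntegral.integral_congr
      intro x _
      ring
    rw [hsum1]
    have hCA : (2*c + c^2)*A ≤ (3 + 3*c + 2*c^2)*A :=
      mul_le_mul_of_nonneg_right (by nlinarith) hA0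
    have hCN : 2*c*N ≤ (3 + 3*c + 2*c^2)*N :=
      mul_le_mul_of_nonneg_right (by nlinarith) hN0
    nlinarith [hDfin, hCA, hCN]
  · -- second inequality
    have hsum2 : ∫ x in (0:ℝ)..(2*Real.pi),
        (‖φ x‖^2 + ‖sDeriv γ φ x‖^2 + ‖sDeriv γ (sDeriv γ φ) x‖^2) * ‖deriv γ x‖
        = A + B + D := by
      rw [hAdef, hBdef, hDdef, ← intervalIntegral.integral_add iA iB,
        ← intervalIntegral.integral_add (iA.add iB) iD]
      apply intervalIntegral.integral_congr
      intro x _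
      ring
    have hsum3 : ∫ x in (0:ℝ)..(2*Real.pi),
        (‖normalDeriv P γ (normalDeriv P γ φ) x‖^2 + ‖φ x‖^2) * ‖deriv γ x‖
        = N + A := by
      rw [hNdef, hAdef, ← intervalIntegral.integral_add iN iA]
      apply intervalIntegral.integral_congr
      intro x _
      ring
    rw [hsum2, hsum3]
    have hCA : (3/2 + 3*c + 3/2*c^2)*A ≤ (3 + 3*c + 2*c^2)*A :=
      mul_le_mul_of_nonneg_right (by nlinarith) hA0
    have hCN : 3*c*N ≤ (3 + 3*c + 2*c^2)*N :=
      mul_le_mul_of_nonneg_right (by nlinarith) hN0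
    nlinarith [hDfin, hB2, hCA, hCN]

end
end

section
/- Let M ⊂ ℝ³ be the analytic surface of revolution parametrized by F(θ,t) = (f(t)cos θ, f(t)sin θ, t) with f(t) = 1 + 1/t, t > 0. For τ > 0 let α(θ) = (f(τ)cos θ, f(τ)sin θ, τ) be the horizontal circle at height τ. Then the geodesic curvature of α in M equals k_α = −(1/f(τ)) [ (f'(τ))²/(1+(f'(τ))²) (cos θ, sin θ, 0) + (0, 0, f'(τ)/(1+(f'(τ))²)) ], its normal covariant derivative satisfies ∇k_α = 0, and the L²-gradient of the elastic energy E = ∫(1 + |k|²/2) ds at α equals ( (1/2)|k_α|² + K − 1 ) k_α, where K = −f''(τ)/(f(τ)(1+(f'(τ))²)²) is the Gaussian curvature of M at height τ. In particular, for τ sufficiently large, (1/2)|k_α|² + K − 1 < 0 and α is not a critical point of E, and the negative gradient −((1/2)|k_α|² + K − 1)k_α is a positive multiple of k_α whose third component is strictly positive. -/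
open scoped InnerProductSpace
open Real

noncomputable section

/-- A vector of `ℝ³`. -/
def vec3 (a b c : ℝ) : EuclideanSpace ℝ (Fin 3) := WithLp.toLp 2 ![a, b, c]

namespace Revolution

/-- The profile function `f(t) = 1 + 1/t` of the surface of revolution. -/
def f (t : ℝ) : ℝ := 1 + 1/t

/-- `f'(t) = -1/t²`. -/
def fp (t : ℝ) : ℝ := -(1/t^2)

/-- `f''(t) = 2/t³`. -/
def fpp (t : ℝ) : ℝ := 2/t^3

/-- The horizontal circle `α(θ) = (f(τ) cos θ, f(τ) sin θ, τ)` at height `τ` on the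
surface of revolution `F(θ,t) = (f(t) cos θ, f(t) sin θ, t)`. -/
def α (τ : ℝ) : ℝ → EuclideanSpace ℝ (Fin 3) :=
  fun θ => vec3 (f τ * cos θ) (f τ * sin θ) τ

/-- The unit normal of the surface of revolution along `α`. -/
def ν (τ : ℝ) : ℝ → EuclideanSpace ℝ (Fin 3) :=
  fun θ => (Real.sqrt (1 + (fp τ)^2))⁻¹ • vec3 (-cos θ) (-sin θ) (fp τ)

/-- Tangential (to the surface `M`) projection along `α`. -/
def proj (τ : ℝ) (θ : ℝ) (w : EuclideanSpace ℝ (Fin 3)) : EuclideanSpace ℝ (Fin 3) :=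
  w - ⟪w, ν τ θ⟫_ℝ • ν τ θ

/-- Arclength derivative along `α` (note `|α'| = f(τ)`). -/
def sder (τ : ℝ) (u : ℝ → EuclideanSpace ℝ (Fin 3)) : ℝ → EuclideanSpace ℝ (Fin 3) :=
  fun θ => (f τ)⁻¹ • deriv u θ

/-- The unit tangent of `α`. -/
def τα (τ : ℝ) : ℝ → EuclideanSpace ℝ (Fin 3) := sder τ (α τ)

/-- The geodesic curvature of `α` in the surface `M`: the tangential projection of
the Euclidean second arclength derivative. -/
def kα (τ : ℝ) : ℝ → EuclideanSpace ℝ (Fin 3) :=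
  fun θ => proj τ θ (sder τ (τα τ) θ)

/-- The normal connection along `α` in the surface. -/
def nab (τ : ℝ) (u : ℝ → EuclideanSpace ℝ (Fin 3)) : ℝ → EuclideanSpace ℝ (Fin 3) :=
  fun θ => proj τ θ (sder τ u θ) - ⟪proj τ θ (sder τ u θ), τα τ θ⟫_ℝ • τα τ θ

/-- The Gaussian curvature of the surface of revolution at height `τ`. -/
def K (τ : ℝ) : ℝ := -fpp τ / (f τ * (1 + (fp τ)^2)^2)

/-- The `L²`-gradient of the elastic energy `E = ∫ (1 + |k|²/2) ds` along `α`: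
`∇²k + (1/2)|k|²k - k + K k` (on a surface `R(k,τ)τ = K k`). -/
def gradE (τ : ℝ) : ℝ → EuclideanSpace ℝ (Fin 3) :=
  fun θ => nab τ (nab τ (kα τ)) θ + (1/2 : ℝ) • (‖kα τ θ‖^2 • kα τ θ)
    - kα τ θ + K τ • kα τ θ

end Revolution

open Revolution

/-!
The curvature vector of the circle has constant coordinates in the rotating frame
`(cos θ, sin θ, 0)`, `(0, 0, 1)`, so its arclength derivative is a multiple of the unit
tangent and `∇k_α = 0`. The gradient then loses its `∇²k_α` term and is
`((1/2)|k_α|² + K - 1) k_α`. Finally `|k_α|² = f'²/(f²(1 + f'²)) < 1` because `f > 1`, and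
`K < 0` because `f'' > 0`, so the coefficient is below `-1/2` at every height `τ > 0`.
-/

@[simp] lemma smul_vec3 (r a b c : ℝ) : r • vec3 a b c = vec3 (r * a) (r * b) (r * c) := by
  ext i; fin_cases i <;> rfl

@[simp] lemma add_vec3 (a b c a' b' c' : ℝ) :
    vec3 a b c + vec3 a' b' c' = vec3 (a + a') (b + b') (c + c') := by
  ext i; fin_cases i <;> rfl

@[simp] lemma sub_vec3 (a b c a' b' c' : ℝ) :
    vec3 a b c - vec3 a' b' c' = vec3 (a - a') (b - b') (c - c') := by
  ext i; fin_cases i <;> rfl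

@[simp] lemma vec3_zero : vec3 0 0 0 = 0 := by
  ext i; fin_cases i <;> rfl

@[simp] lemma vec3_apply_two (a b c : ℝ) : vec3 a b c 2 = c := rfl

@[simp] lemma inner_vec3 (a b c a' b' c' : ℝ) :
    ⟪vec3 a b c, vec3 a' b' c'⟫_ℝ = a * a' + b * b' + c * c' := by
  simp [vec3, PiLp.inner_apply, Fin.sum_univ_three, mul_comm]

lemma norm_vec3_sq (a b c : ℝ) : ‖vec3 a b c‖ ^ 2 = a ^ 2 + b ^ 2 + c ^ 2 := by
  rw [← real_inner_self_eq_norm_sq, inner_vec3]; ring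

lemma HasDerivAt.vec3 {g₁ g₂ g₃ : ℝ → ℝ} {g₁' g₂' g₃' x : ℝ}
    (h₁ : HasDerivAt g₁ g₁' x) (h₂ : HasDerivAt g₂ g₂' x) (h₃ : HasDerivAt g₃ g₃' x) :
    HasDerivAt (fun y => _root_.vec3 (g₁ y) (g₂ y) (g₃ y)) (_root_.vec3 g₁' g₂' g₃') x := by
  have h : HasDerivAt (fun y => (![g₁ y, g₂ y, g₃ y] : Fin 3 → ℝ)) ![g₁', g₂', g₃'] x := by
    rw [hasDerivAt_pi]; intro i; fin_cases i <;> simpa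
  exact (EuclideanSpace.equiv (Fin 3) ℝ).symm.toContinuousLinearMap.hasFDerivAt.comp_hasDerivAt x h

lemma deriv_horizontalCircle (r c θ : ℝ) :
    deriv (fun θ => vec3 (r * cos θ) (r * sin θ) c) θ = vec3 (r * -sin θ) (r * cos θ) 0 :=
  (((hasDerivAt_cos θ).const_mul r).vec3 ((hasDerivAt_sin θ).const_mul r)
    (hasDerivAt_const θ c)).deriv

namespace Revolution

lemma one_lt_f {τ : ℝ} (hτ : 0 < τ) : 1 < f τ := by
  have : 0 < 1 / τ := by positivity
  simp only [f]; linarith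

lemma f_pos {τ : ℝ} (hτ : 0 < τ) : 0 < f τ := one_pos.trans (one_lt_f hτ)

lemma fp_neg {τ : ℝ} (hτ : 0 < τ) : fp τ < 0 := by
  have : 0 < 1 / τ ^ 2 := by positivity
  simp only [fp]; linarith

lemma K_neg {τ : ℝ} (hτ : 0 < τ) : K τ < 0 := by
  have hfpp : 0 < fpp τ := by simp only [fpp]; positivity
  have := f_pos hτ
  simp only [K]
  exact div_neg_of_neg_of_pos (neg_neg_of_pos hfpp) (by positivity)

lemma proj_vec3 (τ θ a b c : ℝ) :
    proj τ θ (vec3 a b c) =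
      let s := (1 + fp τ ^ 2)⁻¹ * (-(a * cos θ) - b * sin θ + c * fp τ)
      vec3 (a - s * -cos θ) (b - s * -sin θ) (c - s * fp τ) := by
  have hss : (√(1 + fp τ ^ 2))⁻¹ ^ 2 = (1 + fp τ ^ 2)⁻¹ := by
    rw [inv_pow, sq_sqrt (by positivity)]
  simp only [proj, ν, inner_vec3, smul_vec3, sub_vec3]
  congr 1 <;> rw [← hss] <;> ring

lemma τα_eq {τ : ℝ} (hτ : 0 < τ) (θ : ℝ) : τα τ θ = vec3 (-sin θ) (cos θ) 0 := by
  have := (f_pos hτ).ne'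
  have hd : deriv (α τ) θ = vec3 (f τ * -sin θ) (f τ * cos θ) 0 :=
    deriv_horizontalCircle _ _ _
  simp only [τα, sder, hd, smul_vec3, mul_zero]
  congr 1 <;> field_simp

def kαRadial (τ : ℝ) : ℝ := -(fp τ ^ 2 / (f τ * (1 + fp τ ^ 2)))

def kαAxial (τ : ℝ) : ℝ := -(fp τ / (f τ * (1 + fp τ ^ 2)))

lemma kα_eq {τ : ℝ} (hτ : 0 < τ) (θ : ℝ) :
    kα τ θ = vec3 (kαRadial τ * cos θ) (kαRadial τ * sin θ) (kαAxial τ) := by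
  have := (f_pos hτ).ne'
  have hd : deriv (τα τ) θ = vec3 (-cos θ) (-sin θ) 0 := by
    rw [funext (τα_eq hτ)]
    exact ((hasDerivAt_sin θ).neg.vec3 (hasDerivAt_cos θ) (hasDerivAt_const θ 0)).deriv
  simp only [kα, sder, hd, smul_vec3, proj_vec3, kαRadial, kαAxial]
  congr 1 <;> field_simp
  · linear_combination cos θ * sin_sq_add_cos_sq θ
  · linear_combination sin θ * sin_sq_add_cos_sq θ
  · linear_combination -fp τ * sin_sq_add_cos_sq θ

lemma kα_eq_neg_inv_f_smul {τ : ℝ} (hτ : 0 < τ) (θ : ℝ) :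
    kα τ θ = -(f τ)⁻¹ •
      ((fp τ ^ 2 / (1 + fp τ ^ 2)) • vec3 (cos θ) (sin θ) 0
        + vec3 0 0 (fp τ / (1 + fp τ ^ 2))) := by
  have := (f_pos hτ).ne'
  simp only [kα_eq hτ, kαRadial, kαAxial, smul_vec3, add_vec3, mul_zero, add_zero, zero_add]
  congr 1 <;> field_simp

lemma nab_kα {τ : ℝ} (hτ : 0 < τ) (θ : ℝ) : nab τ (kα τ) θ = 0 := by
  have hd : deriv (kα τ) θ = vec3 (kαRadial τ * -sin θ) (kαRadial τ * cos θ) 0 := by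
    rw [funext (kα_eq hτ), deriv_horizontalCircle]
  simp only [nab, sder, hd, τα_eq hτ, smul_vec3, proj_vec3, inner_vec3, sub_vec3]
  rw [← vec3_zero]
  congr 1
  · linear_combination (f τ)⁻¹ * kαRadial τ * sin θ * sin_sq_add_cos_sq θ
  · linear_combination -((f τ)⁻¹ * kαRadial τ * cos θ) * sin_sq_add_cos_sq θ
  · ring

lemma nab_nab_kα {τ : ℝ} (hτ : 0 < τ) (θ : ℝ) : nab τ (nab τ (kα τ)) θ = 0 := by
  simp [funext (nab_kα hτ), nab, proj, sder]

lemma gradE_eq {τ : ℝ} (hτ : 0 < τ) (θ : ℝ) :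
    gradE τ θ = ((1 / 2) * ‖kα τ θ‖ ^ 2 + K τ - 1) • kα τ θ := by
  simp only [gradE, nab_nab_kα hτ, zero_add]
  module

lemma norm_kα_sq {τ : ℝ} (hτ : 0 < τ) (θ : ℝ) :
    ‖kα τ θ‖ ^ 2 = fp τ ^ 2 / (f τ ^ 2 * (1 + fp τ ^ 2)) := by
  have := (f_pos hτ).ne'
  rw [kα_eq hτ, norm_vec3_sq, kαRadial, kαAxial]
  field_simp
  linear_combination fp τ ^ 4 * sin_sq_add_cos_sq θ

lemma norm_kα_sq_lt_one {τ : ℝ} (hτ : 0 < τ) (θ : ℝ) : ‖kα τ θ‖ ^ 2 < 1 := by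
  have hf := one_lt_f hτ
  rw [norm_kα_sq hτ, div_lt_one (by positivity)]
  nlinarith [sq_nonneg (fp τ), mul_nonneg (sq_nonneg (fp τ)) (sub_nonneg.2 hf.le)]

lemma gradE_coeff_neg {τ : ℝ} (hτ : 0 < τ) (θ : ℝ) :
    (1 / 2) * ‖kα τ θ‖ ^ 2 + K τ - 1 < 0 := by
  linarith [norm_kα_sq_lt_one hτ θ, K_neg hτ]

lemma kαAxial_pos {τ : ℝ} (hτ : 0 < τ) : 0 < kαAxial τ := by
  have := f_pos hτ
  exact neg_pos.2 (div_neg_of_neg_of_pos (fp_neg hτ) (by positivity))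

lemma kα_two_pos {τ : ℝ} (hτ : 0 < τ) (θ : ℝ) : 0 < kα τ θ 2 := by
  rw [kα_eq hτ, vec3_apply_two]
  exact kαAxial_pos hτ

lemma kα_ne_zero {τ : ℝ} (hτ : 0 < τ) (θ : ℝ) : kα τ θ ≠ 0 := fun h => by
  simpa [h] using kα_two_pos hτ θ

end Revolution

/-- On the analytic surface of revolution `M ⊂ ℝ³` generated by `f(t) = 1 + 1/t`, the
horizontal circle `α` at height `τ > 0` has geodesic curvature
`k_α = -(1/f(τ)) [ (f'(τ))²/(1+f'(τ)²) (cos θ, sin θ, 0) + (0,0, f'(τ)/(1+f'(τ)²)) ]`,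
its normal covariant derivative vanishes, `∇k_α = 0`, and the `L²`-gradient of the
elastic energy at `α` equals `((1/2)|k_α|² + K - 1) k_α` with
`K = -f''(τ)/(f(τ)(1+f'(τ)²)²)` the Gaussian curvature.  Moreover, for `τ`
sufficiently large, `(1/2)|k_α|² + K - 1 < 0`, so `α` is not a critical point,
the negative gradient is a positive multiple of `k_α`, and the third component of
`k_α` is strictly positive. -/
theorem stmt_19 :
    (∀ τ : ℝ, 0 < τ → ∀ θ : ℝ,
      kα τ θ = -(f τ)⁻¹ •
        (((fp τ)^2 / (1 + (fp τ)^2)) • vec3 (cos θ) (sin θ) 0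
          + vec3 0 0 (fp τ / (1 + (fp τ)^2)))) ∧
    (∀ τ : ℝ, 0 < τ → ∀ θ : ℝ, nab τ (kα τ) θ = 0) ∧
    (∀ τ : ℝ, 0 < τ → ∀ θ : ℝ,
      gradE τ θ = ((1/2) * ‖kα τ θ‖^2 + K τ - 1) • kα τ θ) ∧
    (∃ τ₀ > (0:ℝ), ∀ τ ≥ τ₀, ∀ θ : ℝ,
      ((1/2) * ‖kα τ θ‖^2 + K τ - 1 < 0) ∧
      gradE τ θ ≠ 0 ∧
      (∃ c > (0:ℝ), -gradE τ θ = c • kα τ θ) ∧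
      0 < kα τ θ 2) := by
  refine ⟨fun _ => kα_eq_neg_inv_f_smul, fun _ => nab_kα, fun _ => gradE_eq, 1, one_pos,
    fun τ hτ θ => ?_⟩
  have hτ : 0 < τ := one_pos.trans_le hτ
  have hcoeff := gradE_coeff_neg hτ θ
  refine ⟨hcoeff, ?_, ⟨_, neg_pos.2 hcoeff, ?_⟩, kα_two_pos hτ θ⟩
  · rw [gradE_eq hτ]
    exact smul_ne_zero hcoeff.ne (kα_ne_zero hτ θ)
  · rw [gradE_eq hτ, neg_smul]

end
end
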